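/- Let R be a ring and I a two-sided ideal of R that is finitely generated as a left R-module. Then the class of I-power torsion left R-modules is closed under submodules, quotient modules, arbitrary direct sums, and extensions: if 0 → M₁ → M₂ → M₃ → 0 is a short exact sequence of left R-modules with M₁ and M₃ I-power torsion, then M₂ is I-power torsion. -/

import Mathlib

/-!
Since `I` is a right ideal, the elements killed by `I ^ (n + 1)` form a submodule, increasing
in `n`, and their union is the `I`-power torsion submodule; this gives closure under direct sums.
For an extension `0 → M₁ → M₂ → M₃` and `m ∈ M₂` with `I ^ (n + 1) • g m = 0`, the submodule
spanned by `I ^ (n + 1) • m` lies in `f(M₁)`. Powers of a two-sided ideal that is finitely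
generated as a left ideal are again finitely generated, so this submodule is the image of a
finitely generated submodule of `M₁`; being compact in the lattice of submodules, that is killed
by a single `I ^ (k + 1)`, and then `I ^ (k + n + 2)` kills `m`.
-/

/-- `M` is an `I`-power torsion module: every element is annihilated by some power
of `I`. -/
def IsIPowerTorsion {R : Type*} [Ring R] (I : Submodule ℕ R)
    (M : Type*) [AddCommGroup M] [Module R M] : Prop :=
  ∀ m : M, ∃ n : ℕ, ∀ a ∈ (I ^ n : Submodule ℕ R), a • m = 0

section

open Submodule Pointwise

variable {R : Type*} [Ring R] {I : Submodule ℕ R}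

theorem IsIPowerTorsion.of_injective {M N : Type*} [AddCommGroup M] [Module R M]
    [AddCommGroup N] [Module R N] (f : N →ₗ[R] M) (hf : Function.Injective f)
    (h : IsIPowerTorsion I M) : IsIPowerTorsion I N := fun m => by
  obtain ⟨n, hn⟩ := h (f m)
  exact ⟨n, fun a ha => hf (by rw [map_smul, hn a ha, map_zero])⟩

theorem IsIPowerTorsion.of_surjective {M N : Type*} [AddCommGroup M] [Module R M]
    [AddCommGroup N] [Module R N] (f : M →ₗ[R] N) (hf : Function.Surjective f)
    (h : IsIPowerTorsion I M) : IsIPowerTorsion I N := fun m => by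
  obtain ⟨x, rfl⟩ := hf m
  obtain ⟨n, hn⟩ := h x
  exact ⟨n, fun a ha => by rw [← map_smul, hn a ha, map_zero]⟩

theorem mul_mem_pow_succ (hI : ∀ r ∈ I, ∀ a : R, r * a ∈ I) {n : ℕ} {a : R}
    (ha : a ∈ I ^ (n + 1)) (r : R) : a * r ∈ I ^ (n + 1) := by
  rw [pow_succ] at ha ⊢
  refine Submodule.mul_induction_on ha (fun x hx y hy => ?_) (fun x y hx hy => ?_)
  · rw [mul_assoc]; exact mul_mem_mul hx (hI y hy r)
  · rw [add_mul]; exact add_mem hx hy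

theorem pow_le_pow_succ_of_le (hI : ∀ r ∈ I, ∀ a : R, r * a ∈ I) {n k : ℕ} (h : n + 1 ≤ k) :
    I ^ k ≤ I ^ (n + 1) := by
  obtain ⟨j, rfl⟩ := Nat.exists_eq_add_of_le h
  rw [pow_add]
  exact mul_le.2 fun a ha _ _ => mul_mem_pow_succ hI ha _

theorem coe_mul_subset_span_mul (hI : ∀ r ∈ I, ∀ a : R, r * a ∈ I) {J : Submodule ℕ R}
    {S T : Set R} (hS : (I : Set R) ⊆ span R S) (hT : (J : Set R) ⊆ span R T) :
    ((I * J : Submodule ℕ R) : Set R) ⊆ span R (S * T) := by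
  intro x hx
  refine Submodule.mul_induction_on hx (fun a ha b hb => ?_) (fun _ _ => add_mem)
  replace hb := hT hb
  induction hb using span_induction generalizing a with
  | mem t ht =>
    replace ha := hS ha
    induction ha using span_induction with
    | mem s hs => exact subset_span (Set.mul_mem_mul hs ht)
    | zero => rw [zero_mul]; exact zero_mem _
    | add x y _ _ hx hy => rw [add_mul]; exact add_mem hx hy
    | smul r x _ hx => rw [smul_eq_mul, mul_assoc]; exact smul_mem _ r hx
  | zero => rw [mul_zero]; exact zero_mem _
  | add x y _ _ hx hy => rw [mul_add]; exact add_mem (hx a ha) (hy a ha)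
  | smul r x _ hx => rw [smul_eq_mul, ← mul_assoc]; exact hx _ (hI a ha r)

theorem fg_span_pow_succ (hI : ∀ r ∈ I, ∀ a : R, r * a ∈ I) {S : Set R} (hS : S.Finite)
    (hSI : (span R S : Set R) = I) (n : ℕ) :
    (span R ((I ^ (n + 1) : Submodule ℕ R) : Set R)).FG := by
  suffices ∃ T : Set R, T.Finite ∧ T ⊆ (I ^ (n + 1) : Submodule ℕ R) ∧
      ((I ^ (n + 1) : Submodule ℕ R) : Set R) ⊆ span R T by
    obtain ⟨T, hT, hTI, hIT⟩ := this
    exact fg_def.2 ⟨T, hT, le_antisymm (span_mono hTI) (span_le.2 hIT)⟩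
  have hSsub : S ⊆ I := hSI ▸ subset_span
  induction n with
  | zero => exact ⟨S, hS, by simpa using hSsub, by simp [hSI]⟩
  | succ n ih =>
    obtain ⟨T, hT, hTI, hIT⟩ := ih
    refine ⟨S * T, hS.mul hT, ?_, ?_⟩ <;> rw [pow_succ']
    · rintro _ ⟨s, hs, t, ht, rfl⟩
      exact mul_mem_mul (hSsub hs) (hTI ht)
    · exact coe_mul_subset_span_mul hI hSI.ge hIT

/-- The annihilator of `I ^ (n + 1)`; the shift is needed because `I ^ 0`, the `ℕ`-span of `1`,
is not a right ideal. -/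
def powAnnihilator (hI : ∀ r ∈ I, ∀ a : R, r * a ∈ I) (M : Type*) [AddCommGroup M]
    [Module R M] (n : ℕ) : Submodule R M where
  carrier := {m | ∀ a ∈ I ^ (n + 1), a • m = 0}
  add_mem' hx hy a ha := by rw [smul_add, hx a ha, hy a ha, add_zero]
  zero_mem' a _ := smul_zero a
  smul_mem' r _ hx a ha := by rw [smul_smul]; exact hx _ (mul_mem_pow_succ hI ha r)

def powTorsion (hI : ∀ r ∈ I, ∀ a : R, r * a ∈ I) (M : Type*) [AddCommGroup M]
    [Module R M] : Submodule R M :=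
  ⨆ n, powAnnihilator hI M n

section PowAnnihilator

variable (hI : ∀ r ∈ I, ∀ a : R, r * a ∈ I) {M N : Type*} [AddCommGroup M] [Module R M]
  [AddCommGroup N] [Module R N]

theorem powAnnihilator_mono : Monotone (powAnnihilator hI M) :=
  fun _ _ h _ hm a ha => hm a (pow_le_pow_succ_of_le hI (by omega) ha)

theorem mem_powAnnihilator_of_pow_smul_eq_zero {m : M} {n : ℕ}
    (h : ∀ a ∈ I ^ n, a • m = 0) : m ∈ powAnnihilator hI M n := by
  cases n with
  | zero =>
    have hm : m = 0 := by simpa using h 1 (by rw [pow_zero]; exact one_le.1 le_rfl)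
    exact hm ▸ zero_mem _
  | succ n => exact fun a ha => h a (pow_le_pow_succ_of_le hI (by omega) ha)

theorem mem_powAnnihilator_of_smul_mem {m : M} {n k : ℕ}
    (h : ∀ a ∈ I ^ (n + 1), a • m ∈ powAnnihilator hI M k) :
    m ∈ powAnnihilator hI M (k + n + 1) := by
  intro c hc
  rw [show k + n + 1 + 1 = (k + 1) + (n + 1) by omega, pow_add] at hc
  refine Submodule.mul_induction_on hc (fun b hb a ha => ?_) (fun x y hx hy => ?_)
  · rw [mul_smul]; exact h a ha b hb
  · rw [add_smul, hx, hy, add_zero]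

theorem map_powAnnihilator_le (f : M →ₗ[R] N) (n : ℕ) :
    (powAnnihilator hI M n).map f ≤ powAnnihilator hI N n := by
  rintro _ ⟨m, hm, rfl⟩ a ha
  rw [← map_smul, hm a ha, map_zero]

theorem isIPowerTorsion_iff : IsIPowerTorsion I M ↔ powTorsion hI M = ⊤ := by
  simp only [eq_top_iff', powTorsion,
    mem_iSup_of_directed _ (powAnnihilator_mono hI).directed_le]
  exact forall_congr' fun m =>
    ⟨fun ⟨n, hn⟩ => ⟨n, mem_powAnnihilator_of_pow_smul_eq_zero hI hn⟩,
      fun ⟨n, hn⟩ => ⟨n + 1, hn⟩⟩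

theorem map_powTorsion_le (f : M →ₗ[R] N) : (powTorsion hI M).map f ≤ powTorsion hI N := by
  rw [powTorsion, Submodule.map_iSup]
  exact iSup_mono (map_powAnnihilator_le hI f)

theorem exists_le_powAnnihilator_of_fg {P : Submodule R M} (hP : P.FG)
    (h : P ≤ powTorsion hI M) : ∃ n, P ≤ powAnnihilator hI M n := by
  obtain ⟨_, ⟨n, rfl⟩, hn⟩ :=
    (CompleteLattice.isCompactElement_iff_le_of_directed_sSup_le _ P).1
      ((fg_iff_compact P).1 hP) _ (Set.range_nonempty _)
      (powAnnihilator_mono hI).directed_le.directedOn_range (by rwa [sSup_range])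
  exact ⟨n, hn⟩

end PowAnnihilator

theorem IsIPowerTorsion.directSum (hI : ∀ r ∈ I, ∀ a : R, r * a ∈ I) {ι : Type*}
    {M : ι → Type*} [∀ i, AddCommGroup (M i)] [∀ i, Module R (M i)]
    (h : ∀ i, IsIPowerTorsion I (M i)) : IsIPowerTorsion I (DirectSum ι M) := by
  classical
  rw [isIPowerTorsion_iff hI, eq_top_iff']
  intro m
  induction m using DirectSum.induction_on with
  | zero => exact zero_mem _
  | of i x =>
    rw [← DirectSum.lof_eq_of R]
    refine map_powTorsion_le hI _ (mem_map_of_mem ?_)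
    rw [(isIPowerTorsion_iff hI).1 (h i)]
    exact mem_top
  | add x y hx hy => exact add_mem hx hy

theorem IsIPowerTorsion.of_range_eq_ker (hI : ∀ r ∈ I, ∀ a : R, r * a ∈ I)
    (hpow : ∀ n, (span R ((I ^ (n + 1) : Submodule ℕ R) : Set R)).FG)
    {M₁ M₂ M₃ : Type*} [AddCommGroup M₁] [AddCommGroup M₂] [AddCommGroup M₃]
    [Module R M₁] [Module R M₂] [Module R M₃] {f : M₁ →ₗ[R] M₂} {g : M₂ →ₗ[R] M₃}
    (hf : Function.Injective f) (hexact : LinearMap.range f = LinearMap.ker g)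
    (h₁ : IsIPowerTorsion I M₁) (h₃ : IsIPowerTorsion I M₃) : IsIPowerTorsion I M₂ := by
  rw [isIPowerTorsion_iff hI] at h₁
  intro m
  obtain ⟨n, hn⟩ := h₃ (g m)
  replace hn := mem_powAnnihilator_of_pow_smul_eq_zero hI hn
  set P := (span R ((I ^ (n + 1) : Submodule ℕ R) : Set R)).map
    (LinearMap.toSpanSingleton R M₂ m) with hP_def
  have hP : P ≤ LinearMap.range f := by
    rw [hP_def, Submodule.map_span, span_le, hexact]
    rintro _ ⟨a, ha, rfl⟩
    rw [SetLike.mem_coe, LinearMap.mem_ker, LinearMap.toSpanSingleton_apply, map_smul]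
    exact hn a ha
  obtain ⟨k, hk⟩ := exists_le_powAnnihilator_of_fg hI
    (fg_of_fg_map_injective f hf (by rw [map_comap_eq_self hP]; exact (hpow n).map _))
    (h₁ ▸ le_top : P.comap f ≤ powTorsion hI M₁)
  refine ⟨k + n + 1 + 1, mem_powAnnihilator_of_smul_mem hI fun a ha => ?_⟩
  have haP : a • m ∈ (P.comap f).map f := by
    rw [map_comap_eq_self hP]
    exact mem_map_of_mem (subset_span ha)
  exact map_powAnnihilator_le hI f k (map_mono hk haP)

end

theorem torsionClass_closure_general {R : Type*} [Ring R] (I : Submodule ℕ R)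
    (hright : ∀ r ∈ I, ∀ a : R, r * a ∈ I)
    (hfg : ∃ S : Finset R, (Submodule.span R (S : Set R) : Set R) = (I : Set R)) :
    -- closed under submodules
    (∀ (M : Type*) [AddCommGroup M] [Module R M] (N : Submodule R M),
      IsIPowerTorsion I M → IsIPowerTorsion I N) ∧
    -- closed under quotient modules
    (∀ (M : Type*) [AddCommGroup M] [Module R M] (N : Submodule R M),
      IsIPowerTorsion I M → IsIPowerTorsion I (M ⧸ N)) ∧
    -- closed under arbitrary direct sums
    (∀ (ι : Type*) [DecidableEq ι] (M : ι → Type*)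
      [∀ i, AddCommGroup (M i)] [∀ i, Module R (M i)],
      (∀ i, IsIPowerTorsion I (M i)) → IsIPowerTorsion I (DirectSum ι M)) ∧
    -- closed under extensions
    (∀ (M₁ M₂ M₃ : Type*) [AddCommGroup M₁] [AddCommGroup M₂] [AddCommGroup M₃]
      [Module R M₁] [Module R M₂] [Module R M₃]
      (f : M₁ →ₗ[R] M₂) (g : M₂ →ₗ[R] M₃),
      Function.Injective f → Function.Surjective g →
      LinearMap.range f = LinearMap.ker g →
      IsIPowerTorsion I M₁ → IsIPowerTorsion I M₃ → IsIPowerTorsion I M₂) := by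
  obtain ⟨S, hS⟩ := hfg
  refine ⟨fun M _ _ N => IsIPowerTorsion.of_injective N.subtype Subtype.val_injective,
    fun M _ _ N => IsIPowerTorsion.of_surjective N.mkQ N.mkQ_surjective,
    fun ι _ M _ _ => IsIPowerTorsion.directSum hright, ?_⟩
  intro M₁ M₂ M₃ _ _ _ _ _ _ f g hf _ hexact
  exact IsIPowerTorsion.of_range_eq_ker hright (fg_span_pow_succ hright S.finite_toSet hS)
    hf hexact

/-- For a two-sided ideal `I` of `R`, finitely generated as a left `R`-module, the
class of `I`-power torsion left `R`-modules is closed under submodules, quotients,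
arbitrary direct sums, and extensions (i.e. it is a hereditary torsion class). -/
theorem torsionClass_closure {R : Type*} [Ring R] (I : Submodule ℕ R)
    (hleft : ∀ r ∈ I, ∀ a : R, a * r ∈ I)
    (hright : ∀ r ∈ I, ∀ a : R, r * a ∈ I)
    (hfg : ∃ S : Finset R, (Submodule.span R (S : Set R) : Set R) = (I : Set R)) :
    -- closed under submodules
    (∀ (M : Type*) [AddCommGroup M] [Module R M] (N : Submodule R M),
      IsIPowerTorsion I M → IsIPowerTorsion I N) ∧
    -- closed under quotient modules
    (∀ (M : Type*) [AddCommGroup M] [Module R M] (N : Submodule R M),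
      IsIPowerTorsion I M → IsIPowerTorsion I (M ⧸ N)) ∧
    -- closed under arbitrary direct sums
    (∀ (ι : Type*) [DecidableEq ι] (M : ι → Type*)
      [∀ i, AddCommGroup (M i)] [∀ i, Module R (M i)],
      (∀ i, IsIPowerTorsion I (M i)) → IsIPowerTorsion I (DirectSum ι M)) ∧
    -- closed under extensions
    (∀ (M₁ M₂ M₃ : Type*) [AddCommGroup M₁] [AddCommGroup M₂] [AddCommGroup M₃]
      [Module R M₁] [Module R M₂] [Module R M₃]
      (f : M₁ →ₗ[R] M₂) (g : M₂ →ₗ[R] M₃),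
      Function.Injective f → Function.Surjective g →
      LinearMap.range f = LinearMap.ker g →
      IsIPowerTorsion I M₁ → IsIPowerTorsion I M₃ → IsIPowerTorsion I M₂) :=
  torsionClass_closure_general I hright hfg
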